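/- There exist absolute constants 0 < c < C such that for all n, m ≥ 3 and p ∈ (0,1), the number of edges N_E of G(n,m,p) satisfies c·R ≤ Var[N_E] ≤ C·R, where R = n² p̂(1−p̂) + n³ (1 − 2p² + p³)^m · min(1, m p³) and p̂ = 1 − (1−p²)^m. Moreover, there exist absolute constants 0 < c' < C' such that if additionally m p³ ≤ 1, then c'·R' ≤ Var[N_E] ≤ C'·R' with R' = n² p̂(1−p̂) + n³ m p³ (1−p̂)². -/

import Mathlib

open Finset MeasureTheory ProbabilityTheory Filter Topology

namespace RIG

noncomputable section

/-- `{0,1}^m`, the space of attribute vectors. -/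
abbrev V (m : ℕ) : Type := Fin m → Bool

/-- The `Bernoulli(p)^{⊗ m}` weight of `x ∈ {0,1}^m`, i.e. `μ_{m,p}({x})`. -/
def bw (m : ℕ) (p : ℝ) (x : V m) : ℝ := ∏ i : Fin m, if x i then p else 1 - p

/-- The `μ_{m,p}^{⊗ k}` weight of a `k`-tuple of attribute vectors. -/
def bwk (m k : ℕ) (p : ℝ) (x : Fin k → V m) : ℝ := ∏ j : Fin k, bw m p (x j)

/-- Integral with respect to `μ_{m,p}^{⊗ k}`. -/
def intk (m k : ℕ) (p : ℝ) (F : (Fin k → V m) → ℝ) : ℝ :=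
  ∑ x : Fin k → V m, bwk m k p x * F x

/-- Squared `L²(μ_{m,p}^{⊗ k})` norm. -/
def normSq (m k : ℕ) (p : ℝ) (F : (Fin k → V m) → ℝ) : ℝ :=
  intk m k p fun x => F x ^ 2

/-- The underlying probability space of `G(n,m,p)`: each of the `n` vertices
chooses an attribute vector in `{0,1}^m`. -/
abbrev Om (n m : ℕ) : Type := Fin n → V m

/-- Probability weight of a sample point `ω`. -/
def Wt (n m : ℕ) (p : ℝ) (ω : Om n m) : ℝ := ∏ k : Fin n, bw m p (ω k)

/-- Expectation of a random variable on `Om n m`. -/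
def EE (n m : ℕ) (p : ℝ) (F : Om n m → ℝ) : ℝ := ∑ ω : Om n m, Wt n m p ω * F ω

/-- Variance of a random variable on `Om n m`. -/
def VarE (n m : ℕ) (p : ℝ) (F : Om n m → ℝ) : ℝ :=
  EE n m p fun ω => (F ω - EE n m p F) ^ 2

/-- Probability of an event. -/
def Pr (n m : ℕ) (p : ℝ) (s : Set (Om n m)) : ℝ :=
  ∑ ω : Om n m, Set.indicator s (Wt n m p) ω

/-- Standardisation of a random variable. -/
def std (n m : ℕ) (p : ℝ) (F : Om n m → ℝ) (ω : Om n m) : ℝ :=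
  (F ω - EE n m p F) / Real.sqrt (VarE n m p F)

/-- The standard normal CDF. -/
def Phi (t : ℝ) : ℝ := (gaussianReal 0 1 (Set.Iic t)).toReal

/-- Kolmogorov distance between (the law of) `F` and the standard normal. -/
def dK (n m : ℕ) (p : ℝ) (F : Om n m → ℝ) : ℝ :=
  ⨆ t : ℝ, |Pr n m p {ω | F ω ≤ t} - Phi t|

/-- Wasserstein distance between (the law of) `F` and the standard normal. -/
def dW (n m : ℕ) (p : ℝ) (F : Om n m → ℝ) : ℝ :=
  ⨆ h : {h : ℝ → ℝ // LipschitzWith 1 h},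
    |EE n m p (fun ω => h.1 (F ω)) - ∫ x, h.1 x ∂(gaussianReal 0 1)|

/-- `d_{K/W}`: the maximum of the Kolmogorov and Wasserstein distances. -/
def dKW (n m : ℕ) (p : ℝ) (F : Om n m → ℝ) : ℝ := max (dK n m p F) (dW n m p F)

/-- The edge probability `p̂ = 1 - (1-p²)^m`. -/
def phat (m : ℕ) (p : ℝ) : ℝ := 1 - (1 - p ^ 2) ^ m

/-- The number of edges of `G(n,m,p)`: two vertices are adjacent iff they share
a chosen attribute. -/
def NE (n m : ℕ) (ω : Om n m) : ℝ :=
  ∑ k : Fin n, ∑ l : Fin n,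
    if k < l ∧ ∃ a : Fin m, ω k a ∧ ω l a then 1 else 0


/-- Assemble `k` variables from three blocks: the first `a` from `w`, the next
`b - a` from `x` and the last `k - b` from `y`. -/
def asm3 {m : ℕ} (a b k : ℕ) (w : Fin a → V m) (x : Fin (b - a) → V m)
    (y : Fin (k - b) → V m) : Fin k → V m := fun i =>
  if h1 : (i : ℕ) < a then w ⟨i, h1⟩
  else if h2 : (i : ℕ) < b then x ⟨(i : ℕ) - a, by omega⟩
  else y ⟨(i : ℕ) - b, by have := i.isLt; omega⟩

/-- The contraction `f *_b^a g` of `f : (V m)^k → ℝ` and `g : (V m)^l → ℝ`: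
the first `a` variables are shared and integrated out, the next `b - a`
variables are shared, and the remaining variable blocks are separate. -/
def contract (m : ℕ) (p : ℝ) (k l a b : ℕ)
    (f : (Fin k → V m) → ℝ) (g : (Fin l → V m) → ℝ)
    (x : Fin (b - a) → V m) (y : Fin (k - b) → V m) (z : Fin (l - b) → V m) : ℝ :=
  ∑ w : Fin a → V m, bwk m a p w * (f (asm3 a b k w x y) * g (asm3 a b l w x z))

/-- Squared `L²` norm `‖f *_b^a g‖₂²` of a contraction. -/
def contractNormSq (m : ℕ) (p : ℝ) (k l a b : ℕ)
    (f : (Fin k → V m) → ℝ) (g : (Fin l → V m) → ℝ) : ℝ :=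
  ∑ x : Fin (b - a) → V m, ∑ y : Fin (k - b) → V m, ∑ z : Fin (l - b) → V m,
    bwk m (b - a) p x * bwk m (k - b) p y * bwk m (l - b) p z *
      contract m p k l a b f g x y z ^ 2

/-- `L²` norm `‖f *_b^a g‖₂` of a contraction. -/
def contractNorm (m : ℕ) (p : ℝ) (k l a b : ℕ)
    (f : (Fin k → V m) → ℝ) (g : (Fin l → V m) → ℝ) : ℝ :=
  Real.sqrt (contractNormSq m p k l a b f g)

/-- `h_j`: integrating out the last `r - j` variables of `h`. -/
def marg (m r j : ℕ) (p : ℝ) (h : (Fin r → V m) → ℝ) (x : Fin j → V m) : ℝ :=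
  ∑ y : Fin (r - j) → V m, bwk m (r - j) p y *
    h fun i =>
      if hi : (i : ℕ) < j then x ⟨i, hi⟩
      else y ⟨(i : ℕ) - j, by have := i.isLt; omega⟩

/-- The centralization `f̄ = f - ∫ f dμ^{⊗k}`. -/
def center (m k : ℕ) (p : ℝ) (f : (Fin k → V m) → ℝ) : (Fin k → V m) → ℝ :=
  fun x => f x - intk m k p f

/-- `Φ_{x_i} f`: centralization of `f` in the `i`-th coordinate. -/
def phiC (m k : ℕ) (p : ℝ) (i : Fin k) (f : (Fin k → V m) → ℝ) :
    (Fin k → V m) → ℝ :=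
  fun x => f x - ∑ t : V m, bw m p t * f (Function.update x i t)

/-- The coordinate-wise centralization `f̈ = Φ_{x₁} ⋯ Φ_{x_k} f`. -/
def ddot (m k : ℕ) (p : ℝ) (f : (Fin k → V m) → ℝ) : (Fin k → V m) → ℝ :=
  (List.finRange k).foldr (phiC m k p) f

/-- The U-statistic `X = ∑_{1 ≤ k₁ < … < k_r ≤ n} h(A^{(k₁)}, …, A^{(k_r)})`. -/
def Ustat (n m r : ℕ) (h : (Fin r → V m) → ℝ) (ω : Om n m) : ℝ :=
  ∑ s : {s : Finset (Fin n) // s.card = r}, h fun i => ω (s.1.orderEmbOfFin s.2 i)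


/-- The attribute `a` *builds* the set `C ⊆ V(H)` (where `S = V(H)`): all
vertices of `C` chose `a` and no other vertex of `S` chose `a`. -/
def Builds (n m : ℕ) (ω : Om n m) (a : Fin m) (S C : Finset (Fin n)) : Prop :=
  (∀ v ∈ C, ω v a = true) ∧ ∀ v ∈ S, v ∉ C → ω v a = false

/-- `𝒫(H)`: the family of subsets of `S = V(H)` containing both endpoints of at
least one edge of `H` (edges given by the family `E` of `2`-element sets). -/
def Pcal (n : ℕ) (S : Finset (Fin n)) (E : Finset (Finset (Fin n))) :
    Finset (Finset (Fin n)) :=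
  S.powerset.filter fun C => ∃ e ∈ E, e ⊆ C

/-- `𝒞` is a clique cover of the graph `H = (S, E)`. -/
def IsCliqueCover (n : ℕ) (S : Finset (Fin n)) (E : Finset (Finset (Fin n)))
    (𝒞 : Finset (Finset (Fin n))) : Prop :=
  𝒞 ⊆ Pcal n S E ∧ ∀ e ∈ E, ∃ C ∈ 𝒞, e ⊆ C

/-- `H = (S, E)` is *given by* the clique cover `𝒞` in `G(n,m,p)`: every
`C ∈ 𝒞` is built by some attribute and no member of `𝒫(H) \ 𝒞` is built by
any attribute. -/
def GivenBy (n m : ℕ) (ω : Om n m) (S : Finset (Fin n))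
    (E : Finset (Finset (Fin n))) (𝒞 : Finset (Finset (Fin n))) : Prop :=
  (∀ C ∈ 𝒞, ∃ a : Fin m, Builds n m ω a S C) ∧
    ∀ C ∈ Pcal n S E, C ∉ 𝒞 → ∀ a : Fin m, ¬Builds n m ω a S C

/-- `π(H, 𝒞)`: probability that `H` is given by precisely the clique cover `𝒞`. -/
def piCC (n m : ℕ) (p : ℝ) (S : Finset (Fin n)) (E : Finset (Finset (Fin n)))
    (𝒞 : Finset (Finset (Fin n))) : ℝ :=
  Pr n m p {ω | GivenBy n m ω S E 𝒞}

/-- `π(H, 𝒞₊, 𝒞₋)`: probability that `H` is given by some clique cover `𝒞`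
with `𝒞₊ ⊆ 𝒞 ⊆ 𝒫(H) \ 𝒞₋`. -/
def piPM (n m : ℕ) (p : ℝ) (S : Finset (Fin n)) (E : Finset (Finset (Fin n)))
    (Cp Cm : Finset (Finset (Fin n))) : ℝ :=
  Pr n m p {ω | ∃ 𝒞 : Finset (Finset (Fin n)),
    Cp ⊆ 𝒞 ∧ 𝒞 ⊆ Pcal n S E \ Cm ∧ IsCliqueCover n S E 𝒞 ∧ GivenBy n m ω S E 𝒞}

/-- `p_C = p^{|C|} (1-p)^{|V(H)| - |C|}`. -/
def pC (n : ℕ) (p : ℝ) (S C : Finset (Fin n)) : ℝ :=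
  p ^ C.card * (1 - p) ^ (S.card - C.card)

open Classical in
/-- The family `𝒦(F,G)` of all clique covers `𝒞` of `F ∪ G` with
`E(G) ⊆ 𝒞 ⊆ 𝒫(F ∪ G) \ E(F)`. -/
def Kfam (n : ℕ) (S : Finset (Fin n)) (EF EG : Finset (Finset (Fin n))) :
    Finset (Finset (Finset (Fin n))) :=
  (Pcal n S (EF ∪ EG)).powerset.filter fun 𝒞 =>
    IsCliqueCover n S (EF ∪ EG) 𝒞 ∧ EG ⊆ 𝒞 ∧ Disjoint 𝒞 EF


/-- The edge kernel `g(x,y) = 1` iff `x` and `y` share a common attribute. -/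
def gfun (m : ℕ) (x y : V m) : ℝ := if ∃ i : Fin m, x i ∧ y i then 1 else 0

/-- `g₁(x) = ∫ g(x,y) dμ_{m,p}(y)`. -/
def g1 (m : ℕ) (p : ℝ) (x : V m) : ℝ := ∑ y : V m, bw m p y * gfun m x y

/-- `ḡ₁ = g₁ - p̂`. -/
def gbar1 (m : ℕ) (p : ℝ) (x : V m) : ℝ := g1 m p x - phat m p

/-- `ḡ₂(x,y) = g(x,y) - p̂`. -/
def gbar2 (m : ℕ) (p : ℝ) (x y : V m) : ℝ := gfun m x y - phat m p

/-- `ρ = 1 - g`. -/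
def rho (m : ℕ) (x y : V m) : ℝ := 1 - gfun m x y

/-- `ρ₁(x) = ∫ ρ(x,y) dμ_{m,p}(y)`. -/
def rho1 (m : ℕ) (p : ℝ) (x : V m) : ℝ := ∑ y : V m, bw m p y * rho m x y

/-- The probability that all the (ordered-pair) edges in `Ed` are present in
`G(n,m,p)`, i.e. `P(H ⊆ G(n,m,p))` for the graph `H` with edge set `Ed`. -/
def piSub (n m : ℕ) (p : ℝ) (Ed : Finset (Fin n × Fin n)) : ℝ :=
  Pr n m p {ω | ∀ e ∈ Ed, ∃ a : Fin m, ω e.1 a ∧ ω e.2 a}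

/-- The set of vertices used by the edge set `Ed`. -/
def supp (n : ℕ) (Ed : Finset (Fin n × Fin n)) : Finset (Fin n) :=
  Ed.image Prod.fst ∪ Ed.image Prod.snd

/-- Edge pattern of `G₁ ≅ K_{1,4}` on `8` labels: edge `k` joins the centre `0`
with the leaf `k+1`. -/
def edg1 (k : Fin 4) : Fin 8 × Fin 8 := (0, ⟨(k : ℕ) + 1, by omega⟩)

/-- Edge pattern of `G₂ ≅ C₄` on `8` labels: edge `k = (a,b)` joins `v_a = a`
with `u_b = 2 + b`, where `a = k / 2` and `b = k % 2`. -/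
def edg2 (k : Fin 4) : Fin 8 × Fin 8 :=
  (⟨(k : ℕ) / 2, by omega⟩, ⟨2 + (k : ℕ) % 2, by omega⟩)

/-- Edge pattern of `G₃ ≅ P₅` (path `z₁–x₁–y–x₂–z₂` with `y = 0`, `x₁ = 1`,
`x₂ = 2`, `z₁ = 3`, `z₂ = 4`): edges `e₁₁ = {x₁,y}`, `e₁₂ = {x₁,z₁}`,
`e₂₁ = {x₂,y}`, `e₂₂ = {x₂,z₂}`. -/
def edg3 : Fin 4 → Fin 8 × Fin 8 := ![(1, 0), (1, 3), (2, 0), (2, 4)]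

/-- The edges of `G_{i,I}` inside `Fin n`, via the injection `v`. -/
def bedg (n : ℕ) (v : Fin 8 → Fin n) (edg : Fin 4 → Fin 8 × Fin 8)
    (I : Finset (Fin 4)) : Finset (Fin n × Fin n) :=
  I.image fun k => (v (edg k).1, v (edg k).2)

/-- The edges of `H_{i,I}`: the edges of `G_{i,I}` together with the isolated
edges `iso I k`, `k ∉ I`. -/
def Hset (n : ℕ) (v : Fin 8 → Fin n) (edg : Fin 4 → Fin 8 × Fin 8)
    (iso : Finset (Fin 4) → Fin 4 → Fin n × Fin n) (I : Finset (Fin 4)) :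
    Finset (Fin n × Fin n) :=
  bedg n v edg I ∪ Iᶜ.image (iso I)

/-- For every `I`, the isolated edges `iso I k`, `k ∉ I`, are proper edges,
pairwise vertex-disjoint, vertex-disjoint from `G_{i,I}`, and the resulting
graph `H_{i,I}` lives on (at most) `8` vertices. -/
def GoodIso (n : ℕ) (v : Fin 8 → Fin n) (edg : Fin 4 → Fin 8 × Fin 8)
    (iso : Finset (Fin 4) → Fin 4 → Fin n × Fin n) : Prop :=
  ∀ I : Finset (Fin 4),
    (∀ k ∉ I, (iso I k).1 ≠ (iso I k).2 ∧
      (iso I k).1 ∉ supp n (bedg n v edg I) ∧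
      (iso I k).2 ∉ supp n (bedg n v edg I)) ∧
    (∀ k ∉ I, ∀ k' ∉ I, k ≠ k' →
      Disjoint ({(iso I k).1, (iso I k).2} : Finset (Fin n))
        {(iso I k').1, (iso I k').2}) ∧
    (supp n (Hset n v edg iso I)).card ≤ 8



/-! ### Auxiliary development for stmt7 -/

def QS (n : ℕ) (S : Finset (Fin n)) (c : V n) : ℝ := if ∀ v ∈ S, c v = true then 1 else 0

lemma QS_eq_prod (n : ℕ) (S : Finset (Fin n)) (c : V n) :
    QS n S c = ∏ v : Fin n, (if v ∈ S then (if c v then (1:ℝ) else 0) else 1) := by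
  unfold QS
  by_cases h : ∀ v ∈ S, c v = true
  · rw [if_pos h]
    refine (Finset.prod_eq_one ?_).symm
    intro v _
    by_cases hv : v ∈ S
    · simp [hv, h v hv]
    · simp [hv]
  · rw [if_neg h]
    push_neg at h
    obtain ⟨v, hvS, hv⟩ := h
    refine (Finset.prod_eq_zero (Finset.mem_univ v) ?_).symm
    simp [hvS, hv]

lemma moment (n : ℕ) (p : ℝ) (S : Finset (Fin n)) :
    ∑ c : V n, bw n p c * QS n S c = p ^ S.card := by
  have hc : ∀ c : V n, bw n p c * QS n S c
      = ∏ v : Fin n, ((if c v then p else 1 - p) * (if v ∈ S then (if c v then (1:ℝ) else 0) else 1)) := by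
    intro c
    rw [QS_eq_prod, bw, Finset.prod_mul_distrib]
  simp_rw [hc]
  have hps := Finset.prod_univ_sum (fun _ : Fin n => (Finset.univ : Finset Bool))
    (fun v b => (if b then p else 1 - p) * (if v ∈ S then (if b then (1:ℝ) else 0) else 1))
  rw [Fintype.piFinset_univ] at hps
  rw [← hps]
  have hb : ∀ v : Fin n, (∑ b : Bool, (if b then p else 1 - p) * (if v ∈ S then (if b then (1:ℝ) else 0) else 1))
      = if v ∈ S then p else 1 := by
    intro v
    by_cases hv : v ∈ S <;> simp [hv]
  simp_rw [hb]
  rw [Finset.prod_ite_mem, Finset.univ_inter, Finset.prod_const]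

lemma sum_bw (n : ℕ) (p : ℝ) : ∑ c : V n, bw n p c = 1 := by
  have := moment n p ∅
  simpa [QS] using this

lemma Wt_eq (n m : ℕ) (p : ℝ) (ω : Om n m) :
    Wt n m p ω = ∏ a : Fin m, bw n p (fun k => ω k a) := by
  unfold Wt bw
  rw [Finset.prod_comm]

lemma EE_prod (n m : ℕ) (p : ℝ) (g : V n → ℝ) :
    EE n m p (fun ω => ∏ a : Fin m, g (fun k => ω k a))
      = (∑ c : V n, bw n p c * g c) ^ m := by
  unfold EE
  have h1 : ∀ ω : Om n m, Wt n m p ω * ∏ a : Fin m, g (fun k => ω k a)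
      = ∏ a : Fin m, (bw n p (fun k => ω k a) * g (fun k => ω k a)) := by
    intro ω
    rw [Wt_eq, Finset.prod_mul_distrib]
  simp_rw [h1]
  rw [Fintype.sum_pow]
  exact (Fintype.sum_equiv (Equiv.piComm (fun _ _ => Bool)).symm _ _ (fun τ => rfl)).symm

lemma sum_Wt (n m : ℕ) (p : ℝ) : ∑ ω : Om n m, Wt n m p ω = 1 := by
  have := EE_prod n m p (fun _ => 1)
  simp only [Finset.prod_const_one, mul_one] at this
  rw [sum_bw] at this
  unfold EE at this
  simpa using this

lemma EE_const (n m : ℕ) (p : ℝ) (c : ℝ) : EE n m p (fun _ => c) = c := by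
  unfold EE
  rw [← Finset.sum_mul, sum_Wt, one_mul]

lemma EE_add (n m : ℕ) (p : ℝ) (F G : Om n m → ℝ) :
    EE n m p (fun ω => F ω + G ω) = EE n m p F + EE n m p G := by
  unfold EE; rw [← Finset.sum_add_distrib]; congr 1; ext ω; ring

lemma EE_sub (n m : ℕ) (p : ℝ) (F G : Om n m → ℝ) :
    EE n m p (fun ω => F ω - G ω) = EE n m p F - EE n m p G := by
  unfold EE; rw [← Finset.sum_sub_distrib]; congr 1; ext ω; ring

lemma EE_smul (n m : ℕ) (p : ℝ) (c : ℝ) (F : Om n m → ℝ) :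
    EE n m p (fun ω => c * F ω) = c * EE n m p F := by
  unfold EE; rw [Finset.mul_sum]; congr 1; ext ω; ring

lemma EE_sum (n m : ℕ) (p : ℝ) {ι : Type*} (s : Finset ι) (F : ι → Om n m → ℝ) :
    EE n m p (fun ω => ∑ i ∈ s, F i ω) = ∑ i ∈ s, EE n m p (F i) := by
  unfold EE
  rw [Finset.sum_comm]
  congr 1; ext ω; rw [Finset.mul_sum]

lemma VarE_eq (n m : ℕ) (p : ℝ) (F : Om n m → ℝ) :
    VarE n m p F = EE n m p (fun ω => F ω * F ω) - (EE n m p F) ^ 2 := by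
  unfold VarE
  have h : (fun ω => (F ω - EE n m p F) ^ 2)
      = fun ω => (F ω * F ω - (2 * EE n m p F) * F ω) + (EE n m p F)^2 := by
    ext ω; ring
  rw [h, EE_add, EE_sub, EE_smul, EE_const]
  ring

def RS (n m : ℕ) (S : Finset (Fin n)) (ω : Om n m) : ℝ :=
  ∏ a : Fin m, (1 - QS n S (fun k => ω k a))

lemma EE_RS (n m : ℕ) (p : ℝ) (S : Finset (Fin n)) :
    EE n m p (RS n m S) = (1 - p ^ S.card) ^ m := by
  unfold RS
  refine (EE_prod n m p (fun c => 1 - QS n S c)).trans ?_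
  congr 1
  simp_rw [mul_sub, mul_one, Finset.sum_sub_distrib, sum_bw, moment]

lemma QS_mul (n : ℕ) (S T : Finset (Fin n)) (c : V n) :
    QS n S c * QS n T c = QS n (S ∪ T) c := by
  simp only [QS, Finset.forall_mem_union]
  by_cases hS : ∀ v ∈ S, c v = true <;> by_cases hT : ∀ v ∈ T, c v = true
  · rw [if_pos hS, if_pos hT, if_pos ⟨hS, hT⟩]; ring
  · rw [if_pos hS, if_neg hT, if_neg (by tauto)]; ring
  · rw [if_neg hS, if_pos hT, if_neg (by tauto)]; ring
  · rw [if_neg hS, if_neg hT, if_neg (by tauto)]; ring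

lemma EE_RS_mul (n m : ℕ) (p : ℝ) (S T : Finset (Fin n)) :
    EE n m p (fun ω => RS n m S ω * RS n m T ω)
      = (1 - p ^ S.card - p ^ T.card + p ^ (S ∪ T).card) ^ m := by
  unfold RS
  simp_rw [← Finset.prod_mul_distrib]
  refine (EE_prod n m p (fun c => (1 - QS n S c) * (1 - QS n T c))).trans ?_
  congr 1
  have h : ∀ c : V n, bw n p c * ((1 - QS n S c) * (1 - QS n T c))
      = bw n p c - bw n p c * QS n S c - bw n p c * QS n T c + bw n p c * QS n (S ∪ T) c := by
    intro c
    rw [← QS_mul]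
    ring
  simp_rw [h, Finset.sum_add_distrib, Finset.sum_sub_distrib, sum_bw, moment]

lemma edge_eq (n m : ℕ) (k l : Fin n) (ω : Om n m) :
    (if ∃ a : Fin m, ω k a ∧ ω l a then (1:ℝ) else 0) = 1 - RS n m {k, l} ω := by
  unfold RS QS
  by_cases h : ∃ a : Fin m, ω k a ∧ ω l a
  · rw [if_pos h]
    obtain ⟨a, ha1, ha2⟩ := h
    rw [Finset.prod_eq_zero (Finset.mem_univ a)]
    · ring
    · have h2 : ∀ v ∈ ({k, l} : Finset (Fin n)), ω v a = true := by
        intro v hv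
        rcases Finset.mem_insert.mp hv with h1 | h1
        · subst h1; exact ha1
        · rw [Finset.mem_singleton] at h1; subst h1; exact ha2
      rw [if_pos h2]; ring
  · rw [if_neg h]
    push_neg at h
    rw [Finset.prod_eq_one]
    · ring
    intro a _
    have h2 : ¬ ∀ v ∈ ({k, l} : Finset (Fin n)), ω v a = true := by
      intro hall
      exact absurd (hall l (by simp)) (h a (hall k (by simp)))
    rw [if_neg h2]; ring

def EP (n : ℕ) : Finset (Fin n × Fin n) :=
  Finset.univ.filter (fun e => e.1 < e.2)

def shares {n : ℕ} (e f : Fin n × Fin n) : Prop :=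
  e.1 = f.1 ∨ e.1 = f.2 ∨ e.2 = f.1 ∨ e.2 = f.2

instance {n : ℕ} (e f : Fin n × Fin n) : Decidable (shares e f) := by
  unfold shares; infer_instance

def S3 (n : ℕ) : Finset ((Fin n × Fin n) × (Fin n × Fin n)) :=
  (EP n ×ˢ EP n).filter (fun x => ¬ x.1 = x.2 ∧ shares x.1 x.2)

lemma NE_eq (n m : ℕ) (ω : Om n m) :
    NE n m ω = ∑ e ∈ EP n, (1 - RS n m {e.1, e.2} ω) := by
  unfold NE EP
  rw [Finset.sum_filter, ← Finset.univ_product_univ, Finset.sum_product]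
  refine Finset.sum_congr rfl fun k _ => Finset.sum_congr rfl fun l _ => ?_
  by_cases hkl : k < l
  · rw [if_pos hkl]
    by_cases h : ∃ a : Fin m, ω k a ∧ ω l a
    · rw [if_pos ⟨hkl, h⟩, ← edge_eq n m k l ω, if_pos h]
    · rw [if_neg (fun hc => h hc.2), ← edge_eq n m k l ω, if_neg h]
  · rw [if_neg hkl, if_neg (fun hc => hkl hc.1)]

lemma EE_NE (n m : ℕ) (p : ℝ) :
    EE n m p (NE n m) = ((EP n).card : ℝ) * (1 - (1 - p ^ 2) ^ m) := by
  have h1 : EE n m p (NE n m)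
      = ∑ e ∈ EP n, EE n m p (fun ω => 1 - RS n m {e.1, e.2} ω) := by
    rw [show NE n m = fun ω => ∑ e ∈ EP n, (1 - RS n m {e.1, e.2} ω) from funext (NE_eq n m)]
    exact EE_sum n m p (EP n) _
  rw [h1]
  rw [Finset.sum_congr rfl (fun e he => ?_), Finset.sum_const, nsmul_eq_mul]
  have hlt : e.1 < e.2 := (Finset.mem_filter.mp he).2
  rw [EE_sub n m p (fun _ => 1) (RS n m {e.1, e.2}), EE_const, EE_RS,
    Finset.card_pair (ne_of_lt hlt)]

lemma EE_XX (n m : ℕ) (p : ℝ) (e f : Fin n × Fin n) (he : e.1 < e.2) (hf : f.1 < f.2) :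
    EE n m p (fun ω => (1 - RS n m {e.1, e.2} ω) * (1 - RS n m {f.1, f.2} ω))
      = 1 - 2 * (1 - p ^ 2) ^ m
        + (1 - 2 * p ^ 2 + p ^ (({e.1, e.2} ∪ {f.1, f.2} : Finset (Fin n)).card)) ^ m := by
  have key : (fun ω : Om n m => (1 - RS n m {e.1, e.2} ω) * (1 - RS n m {f.1, f.2} ω))
      = fun ω => (1 - RS n m {e.1, e.2} ω) - (RS n m {f.1, f.2} ω
          - RS n m {e.1, e.2} ω * RS n m {f.1, f.2} ω) := by
    ext ω; ring
  rw [key, EE_sub, EE_sub, EE_sub, EE_const, EE_RS, EE_RS, EE_RS_mul,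
    Finset.card_pair (ne_of_lt he), Finset.card_pair (ne_of_lt hf)]
  ring

lemma EE_NE2 (n m : ℕ) (p : ℝ) :
    EE n m p (fun ω => NE n m ω * NE n m ω)
      = ∑ x ∈ EP n ×ˢ EP n,
          EE n m p (fun ω => (1 - RS n m {x.1.1, x.1.2} ω) * (1 - RS n m {x.2.1, x.2.2} ω)) := by
  have h1 : (fun ω => NE n m ω * NE n m ω)
      = fun ω => ∑ x ∈ EP n ×ˢ EP n,
          (1 - RS n m {x.1.1, x.1.2} ω) * (1 - RS n m {x.2.1, x.2.2} ω) := by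
    ext ω
    rw [NE_eq, Finset.sum_mul_sum, ← Finset.sum_product']
  rw [h1, EE_sum]

lemma card_u3 {n : ℕ} (e f : Fin n × Fin n) (he : e.1 < e.2) (hf : f.1 < f.2)
    (hne : e ≠ f) (hsh : shares e f) :
    (({e.1, e.2} ∪ {f.1, f.2} : Finset (Fin n)).card) = 3 := by
  obtain ⟨a, b⟩ := e
  obtain ⟨c, d⟩ := f
  simp only at he hf ⊢
  rcases hsh with h | h | h | h
  · subst h
    have hbd : b ≠ d := fun hbd => hne (by simp [hbd])
    refine Finset.card_eq_three.mpr ⟨a, b, d, ne_of_lt he, ne_of_lt hf, hbd, ?_⟩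
    ext x; simp only [Finset.mem_union, Finset.mem_insert, Finset.mem_singleton]; tauto
  · subst h
    refine Finset.card_eq_three.mpr ⟨a, b, c, ne_of_lt he, (ne_of_lt hf).symm,
      (ne_of_lt (lt_trans hf he)).symm, ?_⟩
    ext x; simp only [Finset.mem_union, Finset.mem_insert, Finset.mem_singleton]; tauto
  · subst h
    refine Finset.card_eq_three.mpr ⟨a, b, d, ne_of_lt he, ne_of_lt (lt_trans he hf),
      ne_of_lt hf, ?_⟩
    ext x; simp only [Finset.mem_union, Finset.mem_insert, Finset.mem_singleton]; tauto
  · subst h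
    have hac : a ≠ c := fun hac => hne (by simp [hac])
    refine Finset.card_eq_three.mpr ⟨a, b, c, ne_of_lt he, hac, (ne_of_lt hf).symm, ?_⟩
    ext x; simp only [Finset.mem_union, Finset.mem_insert, Finset.mem_singleton]; tauto

lemma card_u4 {n : ℕ} (e f : Fin n × Fin n) (he : e.1 < e.2) (hf : f.1 < f.2)
    (hsh : ¬ shares e f) :
    (({e.1, e.2} ∪ {f.1, f.2} : Finset (Fin n)).card) = 4 := by
  obtain ⟨a, b⟩ := e
  obtain ⟨c, d⟩ := f
  unfold shares at hsh
  push_neg at hsh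
  obtain ⟨h1, h2, h3, h4⟩ := hsh
  simp only at he hf h1 h2 h3 h4 ⊢
  have hu : ({a, b} ∪ {c, d} : Finset (Fin n)) = insert a (insert b ({c, d} : Finset (Fin n))) := by
    ext x; simp only [Finset.mem_union, Finset.mem_insert, Finset.mem_singleton]; tauto
  rw [hu, Finset.card_insert_of_notMem (by simp [ne_of_lt he, h1, h2]),
    Finset.card_insert_of_notMem (by simp [h3, h4]), Finset.card_pair (ne_of_lt hf)]

lemma Var_decomp (n m : ℕ) (p : ℝ) :
    VarE n m p (NE n m)
      = ((EP n).card : ℝ) * ((1 - p ^ 2) ^ m - ((1 - p ^ 2) ^ m) ^ 2)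
        + ((S3 n).card : ℝ)
          * ((1 - 2 * p ^ 2 + p ^ 3) ^ m - ((1 - p ^ 2) ^ m) ^ 2) := by
  rw [show S3 n = (EP n ×ˢ EP n).filter (fun x => ¬ x.1 = x.2 ∧ shares x.1 x.2) from rfl]
  rw [VarE_eq, EE_NE2, EE_NE]
  have hcard : ((EP n).card : ℝ) * ((EP n).card : ℝ) = ((EP n ×ˢ EP n).card : ℝ) := by
    rw [Finset.card_product]; push_cast; ring
  have expand : (((EP n).card : ℝ) * (1 - (1 - p ^ 2) ^ m)) ^ 2
      = ∑ _x ∈ EP n ×ˢ EP n, (1 - (1 - p ^ 2) ^ m) ^ 2 := by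
    rw [Finset.sum_const, nsmul_eq_mul, ← hcard]; ring
  rw [expand, ← Finset.sum_sub_distrib]
  set A := (1 - p ^ 2) ^ m with hA
  have hterm : ∀ x ∈ EP n ×ˢ EP n,
      EE n m p (fun ω => (1 - RS n m {x.1.1, x.1.2} ω) * (1 - RS n m {x.2.1, x.2.2} ω))
          - (1 - A) ^ 2
        = if x.1 = x.2 then A - A ^ 2
          else if shares x.1 x.2 then (1 - 2 * p ^ 2 + p ^ 3) ^ m - A ^ 2 else 0 := by
    intro x hx
    have he : x.1.1 < x.1.2 := (Finset.mem_filter.mp (Finset.mem_product.mp hx).1).2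
    have hf : x.2.1 < x.2.2 := (Finset.mem_filter.mp (Finset.mem_product.mp hx).2).2
    rw [EE_XX n m p x.1 x.2 he hf]
    by_cases heq : x.1 = x.2
    · rw [if_pos heq, heq, Finset.union_self, Finset.card_pair (ne_of_lt hf)]
      have h2 : (1 - 2 * p ^ 2 + p ^ 2) ^ m = A := by rw [hA]; ring_nf
      rw [h2]; ring
    · rw [if_neg heq]
      by_cases hsh : shares x.1 x.2
      · rw [if_pos hsh, card_u3 x.1 x.2 he hf heq hsh]; ring
      · rw [if_neg hsh, card_u4 x.1 x.2 he hf hsh]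
        have h2 : (1 - 2 * p ^ 2 + p ^ 4) ^ m = A ^ 2 := by
          rw [hA, ← pow_mul, mul_comm m 2, pow_mul]; ring_nf
        rw [h2]; ring
  rw [Finset.sum_congr rfl hterm]
  rw [← Finset.sum_filter_add_sum_filter_not (EP n ×ˢ EP n) (fun x => x.1 = x.2)]
  have hdiag : ∑ x ∈ (EP n ×ˢ EP n).filter (fun x => x.1 = x.2),
      (if x.1 = x.2 then A - A ^ 2
        else if shares x.1 x.2 then (1 - 2 * p ^ 2 + p ^ 3) ^ m - A ^ 2 else 0)
      = ((EP n).card : ℝ) * (A - A ^ 2) := by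
    rw [Finset.sum_congr rfl (fun x hx => if_pos (Finset.mem_filter.mp hx).2),
      Finset.sum_const, nsmul_eq_mul]
    congr 2
    refine Finset.card_bij (fun x _ => x.1) ?_ ?_ ?_
    · intro x hx
      exact (Finset.mem_product.mp (Finset.mem_filter.mp hx).1).1
    · intro x hx y hy hxy
      have hxy' : x.1 = y.1 := hxy
      have hx2 : x.1 = x.2 := (Finset.mem_filter.mp hx).2
      have hy2 : y.1 = y.2 := (Finset.mem_filter.mp hy).2
      exact Prod.ext hxy' (by rw [← hx2, ← hy2, hxy'])
    · intro e he
      exact ⟨(e, e), Finset.mem_filter.mpr ⟨Finset.mem_product.mpr ⟨he, he⟩, rfl⟩, rfl⟩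
  rw [hdiag]
  have hoff : ∑ x ∈ (EP n ×ˢ EP n).filter (fun x => ¬ x.1 = x.2),
      (if x.1 = x.2 then A - A ^ 2
        else if shares x.1 x.2 then (1 - 2 * p ^ 2 + p ^ 3) ^ m - A ^ 2 else 0)
      = (((EP n ×ˢ EP n).filter (fun x => ¬ x.1 = x.2 ∧ shares x.1 x.2)).card : ℝ)
          * ((1 - 2 * p ^ 2 + p ^ 3) ^ m - A ^ 2) := by
    rw [Finset.sum_congr rfl (fun x hx => if_neg (Finset.mem_filter.mp hx).2),
      ← Finset.sum_filter, Finset.filter_filter, Finset.sum_const, nsmul_eq_mul]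
  rw [hoff]

lemma t2_le (n : ℕ) : ((EP n).card : ℝ) ≤ (n : ℝ) ^ 2 := by
  have h : (EP n).card ≤ n * n := by
    calc (EP n).card ≤ (Finset.univ : Finset (Fin n × Fin n)).card :=
          Finset.card_filter_le _ _
      _ = n * n := by simp [Finset.card_univ]
  calc ((EP n).card : ℝ) ≤ ((n * n : ℕ) : ℝ) := by exact_mod_cast h
    _ = (n : ℝ) ^ 2 := by push_cast; ring

lemma t2_ge (n : ℕ) (hn : 3 ≤ n) : (n : ℝ) ^ 2 / 9 ≤ ((EP n).card : ℝ) := by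
  set q := n / 2 with hq
  have h2q : q * 2 ≤ n := Nat.div_mul_le_self n 2
  have h2q' : n ≤ q * 2 + 1 := by omega
  have hinj : (Finset.univ : Finset (Fin q × Fin q)).card ≤ (EP n).card := by
    refine Finset.card_le_card_of_injOn
      (fun x => ((⟨x.1.1, by omega⟩ : Fin n), (⟨q + x.2.1, by omega⟩ : Fin n))) ?_ ?_
    · intro x _
      refine Finset.mem_filter.mpr ⟨Finset.mem_univ _, ?_⟩
      have := x.1.isLt
      exact Fin.mk_lt_mk.mpr (by omega)
    · intro x _ y _ hxy
      simp only [Prod.mk.injEq, Fin.mk.injEq] at hxy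
      have h1 : (x.1 : ℕ) = y.1 := hxy.1
      have h2 : (x.2 : ℕ) = y.2 := by omega
      exact Prod.ext (Fin.val_injective h1) (Fin.val_injective h2)
  have hcard : (Finset.univ : Finset (Fin q × Fin q)).card = q * q := by
    simp [Finset.card_univ]
  have hnq : n ≤ 3 * q := by omega
  have hsq : n * n ≤ 9 * (q * q) := by
    calc n * n ≤ (3 * q) * (3 * q) := Nat.mul_le_mul hnq hnq
      _ = 9 * (q * q) := by ring
  have hfin : n * n ≤ 9 * (EP n).card := by
    have := hcard ▸ hinj
    omega
  have hr : ((n * n : ℕ) : ℝ) ≤ ((9 * (EP n).card : ℕ) : ℝ) := by exact_mod_cast hfin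
  push_cast at hr
  nlinarith [hr]

lemma t3_le (n : ℕ) : ((S3 n).card : ℝ) ≤ 4 * (n : ℝ) ^ 3 := by
  classical
  have hsub : ∀ (pr : (Fin n × Fin n) × (Fin n × Fin n) → Prop) [DecidablePred pr]
      (f : (Fin n × Fin n) × (Fin n × Fin n) → Fin n × Fin n × Fin n),
      (∀ x y, pr x → pr y → f x = f y → x = y) →
      ((Finset.univ.filter pr).card ≤ n ^ 3) := by
    intro pr _ f hinj
    calc (Finset.univ.filter pr).card
        ≤ (Finset.univ : Finset (Fin n × Fin n × Fin n)).card := by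
          refine Finset.card_le_card_of_injOn f (fun _ _ => Finset.mem_univ _) ?_
          intro x hx y hy hxy
          simp only [Finset.coe_filter, Set.mem_setOf_eq] at hx hy
          exact hinj x y hx.2 hy.2 hxy
      _ = n ^ 3 := by simp [Finset.card_univ]; ring
  have h1 := hsub (fun x => x.1.1 = x.2.1) (fun x => (x.1.1, x.1.2, x.2.2))
    (by rintro ⟨⟨a,b⟩,⟨c,d⟩⟩ ⟨⟨a',b'⟩,⟨c',d'⟩⟩ h h' heq
        simp only [Prod.mk.injEq] at *
        refine ⟨⟨heq.1, heq.2.1⟩, ?_, heq.2.2⟩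
        rw [← h, ← h', heq.1])
  have h2 := hsub (fun x => x.1.1 = x.2.2) (fun x => (x.1.1, x.1.2, x.2.1))
    (by rintro ⟨⟨a,b⟩,⟨c,d⟩⟩ ⟨⟨a',b'⟩,⟨c',d'⟩⟩ h h' heq
        simp only [Prod.mk.injEq] at *
        refine ⟨⟨heq.1, heq.2.1⟩, heq.2.2, ?_⟩
        rw [← h, ← h', heq.1])
  have h3 := hsub (fun x => x.1.2 = x.2.1) (fun x => (x.1.1, x.1.2, x.2.2))
    (by rintro ⟨⟨a,b⟩,⟨c,d⟩⟩ ⟨⟨a',b'⟩,⟨c',d'⟩⟩ h h' heq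
        simp only [Prod.mk.injEq] at *
        refine ⟨⟨heq.1, heq.2.1⟩, ?_, heq.2.2⟩
        rw [← h, ← h', heq.2.1])
  have h4 := hsub (fun x => x.1.2 = x.2.2) (fun x => (x.1.1, x.1.2, x.2.1))
    (by rintro ⟨⟨a,b⟩,⟨c,d⟩⟩ ⟨⟨a',b'⟩,⟨c',d'⟩⟩ h h' heq
        simp only [Prod.mk.injEq] at *
        refine ⟨⟨heq.1, heq.2.1⟩, heq.2.2, ?_⟩
        rw [← h, ← h', heq.2.1])
  have hsubset : S3 n ⊆
      (Finset.univ.filter (fun x : (Fin n × Fin n) × (Fin n × Fin n) => x.1.1 = x.2.1))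
      ∪ (Finset.univ.filter (fun x => x.1.1 = x.2.2))
      ∪ (Finset.univ.filter (fun x => x.1.2 = x.2.1))
      ∪ (Finset.univ.filter (fun x => x.1.2 = x.2.2)) := by
    intro x hx
    have hsh : shares x.1 x.2 := (Finset.mem_filter.mp hx).2.2
    simp only [Finset.mem_union, Finset.mem_filter, Finset.mem_univ, true_and]
    unfold shares at hsh
    tauto
  have hle : (S3 n).card ≤ 4 * n ^ 3 := by
    calc (S3 n).card ≤ _ := Finset.card_le_card hsubset
      _ ≤ _ + _ := Finset.card_union_le _ _
      _ ≤ (_ + _) + _ := Nat.add_le_add_right (Finset.card_union_le _ _) _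
      _ ≤ ((_ + _) + _) + _ := Nat.add_le_add_right (Nat.add_le_add_right (Finset.card_union_le _ _) _) _
      _ ≤ 4 * n ^ 3 := by omega
  calc ((S3 n).card : ℝ) ≤ ((4 * n ^ 3 : ℕ) : ℝ) := by exact_mod_cast hle
    _ = 4 * (n : ℝ) ^ 3 := by push_cast; ring

lemma t3_ge (n : ℕ) (hn : 3 ≤ n) : (n : ℝ) ^ 3 / 729 ≤ ((S3 n).card : ℝ) := by
  set q := n / 3 with hq
  have h3q : q * 3 ≤ n := Nat.div_mul_le_self n 3
  have h3q' : n ≤ q * 3 + 2 := by omega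
  have hq1 : 1 ≤ q := by omega
  have hinj : (Finset.univ : Finset (Fin q × Fin q × Fin q)).card ≤ (S3 n).card := by
    refine Finset.card_le_card_of_injOn
      (fun x => (((⟨x.1.1, by omega⟩ : Fin n), (⟨q + x.2.1.1, by omega⟩ : Fin n)),
                 ((⟨x.1.1, by omega⟩ : Fin n), (⟨2 * q + x.2.2.1, by omega⟩ : Fin n)))) ?_ ?_
    · intro x _
      have hx1 := x.1.isLt
      have hx2 := x.2.1.isLt
      have hx3 := x.2.2.isLt
      refine Finset.mem_filter.mpr ⟨Finset.mem_product.mpr ⟨?_, ?_⟩, ?_, Or.inl rfl⟩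
      · exact Finset.mem_filter.mpr ⟨Finset.mem_univ _, Fin.mk_lt_mk.mpr (by omega)⟩
      · exact Finset.mem_filter.mpr ⟨Finset.mem_univ _, Fin.mk_lt_mk.mpr (by omega)⟩
      · intro hc
        have : (q + x.2.1.1 : ℕ) = 2 * q + x.2.2.1 := by
          have := congrArg (fun y : (Fin n × Fin n) => (y.2 : ℕ)) hc
          simpa using this
        omega
    · intro x _ y _ hxy
      simp only [Prod.mk.injEq, Fin.mk.injEq] at hxy
      obtain ⟨⟨h1, h2⟩, _, h3⟩ := hxy
      refine Prod.ext (Fin.val_injective h1) (Prod.ext (Fin.val_injective (by omega))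
        (Fin.val_injective (by omega)))
  have hcard : (Finset.univ : Finset (Fin q × Fin q × Fin q)).card = q * (q * q) := by
    simp [Finset.card_univ]
  have hnq : n ≤ 9 * q := by omega
  have hcube : n * (n * n) ≤ 729 * (q * (q * q)) := by
    calc n * (n * n) ≤ (9 * q) * ((9 * q) * (9 * q)) :=
          Nat.mul_le_mul hnq (Nat.mul_le_mul hnq hnq)
      _ = 729 * (q * (q * q)) := by ring
  have hfin : n * (n * n) ≤ 729 * (S3 n).card := by
    have := hcard ▸ hinj
    calc n * (n * n) ≤ 729 * (q * (q * q)) := hcube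
      _ ≤ 729 * (S3 n).card := by omega
  have hr : ((n * (n * n) : ℕ) : ℝ) ≤ ((729 * (S3 n).card : ℕ) : ℝ) := by exact_mod_cast hfin
  push_cast at hr
  nlinarith [hr]

lemma t_pos (p : ℝ) (hp0 : 0 < p) (hp1 : p < 1) : 0 < 1 - 2*p^2 + p^3 := by
  have h1 : 0 < 1 - p := by linarith
  have h2 : 0 < 1 + p - p^2 := by nlinarith
  nlinarith [mul_pos h1 h2]

/-- shared setup facts -/
lemma s_facts (m : ℕ) (p : ℝ) (hm : 3 ≤ m) (hp0 : 0 < p) (hp1 : p < 1) :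
    0 ≤ p^3*(1-p)/(1 - 2*p^2 + p^3)
    ∧ p^3*(1-p)/(1 - 2*p^2 + p^3) ≤ p^3
    ∧ (4/5)*p^3 ≤ p^3*(1-p)/(1 - 2*p^2 + p^3)
    ∧ ((1 - p^2)^m)^2 = (1 - 2*p^2 + p^3)^m * (1 - p^3*(1-p)/(1 - 2*p^2 + p^3))^m := by
  have ht : 0 < 1 - 2*p^2 + p^3 := t_pos p hp0 hp1
  refine ⟨?_, ?_, ?_, ?_⟩
  · exact div_nonneg (mul_nonneg (pow_nonneg hp0.le 3) (by linarith)) ht.le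
  · rw [div_le_iff₀ ht]
    nlinarith [sq_nonneg (p^2*(1-p)), sq_nonneg p]
  · rw [le_div_iff₀ ht]
    nlinarith [mul_nonneg (mul_nonneg (pow_nonneg hp0.le 3) (by linarith : (0:ℝ) ≤ 1-p))
      (sq_nonneg (2*p-1))]
  · rw [← pow_mul, mul_comm m 2, pow_mul, ← mul_pow]
    congr 1
    rw [mul_sub, mul_one, mul_div_assoc', mul_comm (1 - 2*p^2 + p^3), mul_div_assoc,
      div_self ht.ne', mul_one]
    ring

lemma D3_bounds (m : ℕ) (p : ℝ) (hm : 3 ≤ m) (hp0 : 0 < p) (hp1 : p < 1) :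
    (2/5) * ((1 - 2*p^2 + p^3)^m * min 1 ((m:ℝ)*p^3))
        ≤ (1 - 2*p^2 + p^3)^m - ((1 - p^2)^m)^2
    ∧ (1 - 2*p^2 + p^3)^m - ((1 - p^2)^m)^2
        ≤ (1 - 2*p^2 + p^3)^m * min 1 ((m:ℝ)*p^3) := by
  obtain ⟨hs0, hsle, hsge, hA2⟩ := s_facts m p hm hp0 hp1
  set s := p^3*(1-p)/(1 - 2*p^2 + p^3) with hs
  set T := (1 - 2*p^2 + p^3)^m with hT
  have htm : 0 < T := pow_pos (t_pos p hp0 hp1) m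
  have hp3 : p^3 < 1 := by nlinarith
  have hs1 : s < 1 := lt_of_le_of_lt hsle hp3
  set w := (1-s)^m with hw
  have hw0 : 0 ≤ w := pow_nonneg (by linarith) m
  have hbern : 1 - (m:ℝ)*s ≤ w := by
    have h := one_add_mul_le_pow (show (-2:ℝ) ≤ -s by linarith) m
    simp only [mul_neg, ← sub_eq_add_neg] at h
    exact h
  have hkey : w + ((m:ℝ)*s)*w ≤ 1 := by
    have h1 : 1 + (m:ℝ)*s ≤ (1+s)^m := one_add_mul_le_pow (by linarith) m
    have h2 : (1+s)^m * w ≤ 1 := by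
      rw [hw, ← mul_pow]
      refine pow_le_one₀ (by nlinarith) (by nlinarith)
    nlinarith [mul_le_mul_of_nonneg_right h1 hw0]
  have hm0 : (0:ℝ) ≤ (m:ℝ) := by positivity
  have hsw : 0 ≤ ((m:ℝ)*s)*w := mul_nonneg (mul_nonneg hm0 hs0) hw0
  have hw1 : w ≤ 1 := by linarith
  have hS0 : 0 ≤ (m:ℝ)*s := mul_nonneg hm0 hs0
  have hSle : (m:ℝ)*s ≤ (m:ℝ)*p^3 := mul_le_mul_of_nonneg_left hsle hm0
  have hSge : (4/5)*((m:ℝ)*p^3) ≤ (m:ℝ)*s := by nlinarith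
  constructor
  · -- lower bound
    have hgoal : (2/5) * min 1 ((m:ℝ)*p^3) ≤ 1 - w := by
      by_cases hc : (m:ℝ)*p^3 ≤ 1
      · rw [min_eq_right hc]
        have hprod : 0 ≤ (1-w)*(1-(m:ℝ)*s) := by
          apply mul_nonneg <;> linarith
        nlinarith [hprod]
      · push_neg at hc
        rw [min_eq_left (le_of_lt hc)]
        have hS1 : (4:ℝ)/5 ≤ (m:ℝ)*s := by linarith [hSge, hc]
        linarith [mul_le_mul_of_nonneg_right hS1 hw0]
    linarith [mul_le_mul_of_nonneg_left hgoal htm.le]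
  · have hgoal : 1 - w ≤ min 1 ((m:ℝ)*p^3) := by
      refine le_min (by linarith) (by linarith)
    linarith [mul_le_mul_of_nonneg_left hgoal htm.le]

lemma B_bounds (m : ℕ) (p : ℝ) (hm : 3 ≤ m) (hp0 : 0 < p) (hp1 : p < 1)
    (hmp : (m:ℝ)*p^3 ≤ 1) :
    ((1 - p^2)^m)^2 ≤ (1 - 2*p^2 + p^3)^m
    ∧ (1 - 2*p^2 + p^3)^m ≤ 8 * ((1 - p^2)^m)^2 := by
  obtain ⟨hs0, hsle, hsge, hA2⟩ := s_facts m p hm hp0 hp1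
  set s := p^3*(1-p)/(1 - 2*p^2 + p^3) with hs
  set T := (1 - 2*p^2 + p^3)^m with hT
  have htm : 0 < T := pow_pos (t_pos p hp0 hp1) m
  have hm3 : (3:ℝ) ≤ (m:ℝ) := by exact_mod_cast hm
  have hp13 : p^3 ≤ 1/3 := by nlinarith
  have hs13 : s ≤ 1/3 := le_trans hsle hp13
  set w := (1-s)^m with hw
  have hw0 : 0 ≤ w := pow_nonneg (by linarith) m
  have hw1 : w ≤ 1 := pow_le_one₀ (by linarith) (by linarith)
  have hm0 : (0:ℝ) ≤ (m:ℝ) := by positivity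
  have hms : (m:ℝ)*s ≤ 1 := le_trans (mul_le_mul_of_nonneg_left hsle hm0) hmp
  constructor
  · linarith [mul_le_mul_of_nonneg_left hw1 htm.le]
  · have h18 : (1:ℝ)/8 ≤ w := by
      have ha : (1:ℝ)+2*s ≤ Real.exp (2*s) := by
        have := Real.add_one_le_exp (2*s); linarith
      have hb : ((1:ℝ)+2*s)^m ≤ Real.exp (2*s)^m :=
        pow_le_pow_left₀ (by linarith) ha m
      have hc : Real.exp (2*s)^m = Real.exp ((m:ℝ)*(2*s)) := by
        rw [← Real.exp_nat_mul]
      have hd : Real.exp ((m:ℝ)*(2*s)) ≤ Real.exp 2 :=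
        Real.exp_le_exp.mpr (by nlinarith)
      have he : Real.exp 2 ≤ 8 := by
        have h1 := Real.exp_one_lt_d9
        have h2 : Real.exp 2 = Real.exp 1 * Real.exp 1 := by
          rw [← Real.exp_add]; norm_num
        nlinarith [Real.exp_pos 1]
      have h1 : ((1:ℝ)+2*s)^m ≤ 8 := by
        calc ((1:ℝ)+2*s)^m ≤ Real.exp (2*s)^m := hb
          _ = Real.exp ((m:ℝ)*(2*s)) := hc
          _ ≤ Real.exp 2 := hd
          _ ≤ 8 := he
      have h2 : (1:ℝ) ≤ w * (1+2*s)^m := by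
        rw [hw, ← mul_pow]
        refine one_le_pow₀ ?_
        nlinarith
      have h3 : (0:ℝ) < (1+2*s)^m := pow_pos (by linarith) m
      nlinarith [mul_le_mul_of_nonneg_left h1 hw0]
    linarith [mul_le_mul_of_nonneg_left h18 htm.le]




set_option maxHeartbeats 2000000 in
/-- two-sided estimates of `Var[N_E]` (Lemma 3.1, (3.2)–(3.3)). -/
theorem stmt7 :
    (∃ c C : ℝ, 0 < c ∧ c < C ∧
      ∀ (n m : ℕ) (p : ℝ), 3 ≤ n → 3 ≤ m → 0 < p → p < 1 →
        c * ((n : ℝ) ^ 2 * phat m p * (1 - phat m p) +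
              (n : ℝ) ^ 3 * (1 - 2 * p ^ 2 + p ^ 3) ^ m * min 1 ((m : ℝ) * p ^ 3)) ≤
            VarE n m p (NE n m) ∧
          VarE n m p (NE n m) ≤
            C * ((n : ℝ) ^ 2 * phat m p * (1 - phat m p) +
              (n : ℝ) ^ 3 * (1 - 2 * p ^ 2 + p ^ 3) ^ m * min 1 ((m : ℝ) * p ^ 3))) ∧
    (∃ c' C' : ℝ, 0 < c' ∧ c' < C' ∧
      ∀ (n m : ℕ) (p : ℝ), 3 ≤ n → 3 ≤ m → 0 < p → p < 1 → (m : ℝ) * p ^ 3 ≤ 1 →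
        c' * ((n : ℝ) ^ 2 * phat m p * (1 - phat m p) +
              (n : ℝ) ^ 3 * (m : ℝ) * p ^ 3 * (1 - phat m p) ^ 2) ≤
            VarE n m p (NE n m) ∧
          VarE n m p (NE n m) ≤
            C' * ((n : ℝ) ^ 2 * phat m p * (1 - phat m p) +
              (n : ℝ) ^ 3 * (m : ℝ) * p ^ 3 * (1 - phat m p) ^ 2)) := by
  constructor
  · refine ⟨1/2000, 4, by norm_num, by norm_num, ?_⟩
    intro n m p hn hm hp0 hp1
    obtain ⟨hd3l, hd3u⟩ := D3_bounds m p hm hp0 hp1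
    have hA0 : 0 < (1 - p^2)^m := pow_pos (by nlinarith) m
    have hA1 : (1 - p^2)^m < 1 :=
      pow_lt_one₀ (by nlinarith) (by nlinarith) (by omega)
    have hB0 : 0 < (1 - 2*p^2 + p^3)^m := pow_pos (t_pos p hp0 hp1) m
    have hM0 : 0 ≤ min 1 ((m:ℝ)*p^3) := le_min (by norm_num) (by positivity)
    have hD2 : 0 ≤ (1 - p^2)^m - ((1 - p^2)^m)^2 := by nlinarith
    have hBM : 0 ≤ (1 - 2*p^2 + p^3)^m * min 1 ((m:ℝ)*p^3) := mul_nonneg hB0.le hM0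
    have hn2 : (0:ℝ) ≤ (n:ℝ)^2 := by positivity
    have hn3 : (0:ℝ) ≤ (n:ℝ)^3 := by positivity
    have ht2r0 : (0:ℝ) ≤ ((EP n).card : ℝ) := Nat.cast_nonneg _
    have ht3r0 : (0:ℝ) ≤ ((S3 n).card : ℝ) := Nat.cast_nonneg _
    have ht2l := t2_ge n hn
    have ht2u := t2_le n
    have ht3l := t3_ge n hn
    have ht3u := t3_le n
    have hphat : phat m p = 1 - (1 - p^2)^m := rfl
    rw [Var_decomp n m p, hphat]
    have l2 : (n:ℝ)^2/9 * ((1 - p^2)^m - ((1 - p^2)^m)^2)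
        ≤ ((EP n).card : ℝ) * ((1 - p^2)^m - ((1 - p^2)^m)^2) :=
      mul_le_mul_of_nonneg_right ht2l hD2
    have l1 : (n:ℝ)^3/729 * ((2/5) * ((1 - 2*p^2 + p^3)^m * min 1 ((m:ℝ)*p^3)))
        ≤ ((S3 n).card : ℝ) * ((1 - 2*p^2 + p^3)^m - ((1 - p^2)^m)^2) :=
      mul_le_mul ht3l hd3l (by nlinarith) ht3r0
    have l3 : 0 ≤ (n:ℝ)^2 * ((1 - p^2)^m - ((1 - p^2)^m)^2) := mul_nonneg hn2 hD2
    have l4 : 0 ≤ (n:ℝ)^3 * ((1 - 2*p^2 + p^3)^m * min 1 ((m:ℝ)*p^3)) := mul_nonneg hn3 hBM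
    have u1 : ((EP n).card : ℝ) * ((1 - p^2)^m - ((1 - p^2)^m)^2)
        ≤ (n:ℝ)^2 * ((1 - p^2)^m - ((1 - p^2)^m)^2) :=
      mul_le_mul_of_nonneg_right ht2u hD2
    have u2 : ((S3 n).card : ℝ) * ((1 - 2*p^2 + p^3)^m - ((1 - p^2)^m)^2)
        ≤ (4 * (n:ℝ)^3) * ((1 - 2*p^2 + p^3)^m * min 1 ((m:ℝ)*p^3)) :=
      mul_le_mul ht3u hd3u (by nlinarith) (by positivity)
    constructor
    · linarith
    · linarith
  · refine ⟨1/2000, 32, by norm_num, by norm_num, ?_⟩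
    intro n m p hn hm hp0 hp1 hmp
    obtain ⟨hd3l, hd3u⟩ := D3_bounds m p hm hp0 hp1
    obtain ⟨hBl, hBu⟩ := B_bounds m p hm hp0 hp1 hmp
    rw [min_eq_right hmp] at hd3l hd3u
    have hA0 : 0 < (1 - p^2)^m := pow_pos (by nlinarith) m
    have hA1 : (1 - p^2)^m < 1 :=
      pow_lt_one₀ (by nlinarith) (by nlinarith) (by omega)
    have hB0 : 0 < (1 - 2*p^2 + p^3)^m := pow_pos (t_pos p hp0 hp1) m
    have hD2 : 0 ≤ (1 - p^2)^m - ((1 - p^2)^m)^2 := by nlinarith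
    have hmp0 : (0:ℝ) ≤ (m:ℝ)*p^3 := by positivity
    have hn2 : (0:ℝ) ≤ (n:ℝ)^2 := by positivity
    have hn3 : (0:ℝ) ≤ (n:ℝ)^3 := by positivity
    have ht2r0 : (0:ℝ) ≤ ((EP n).card : ℝ) := Nat.cast_nonneg _
    have ht3r0 : (0:ℝ) ≤ ((S3 n).card : ℝ) := Nat.cast_nonneg _
    have ht2l := t2_ge n hn
    have ht2u := t2_le n
    have ht3l := t3_ge n hn
    have ht3u := t3_le n
    have hphat : phat m p = 1 - (1 - p^2)^m := rfl
    rw [Var_decomp n m p, hphat]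
    have hcmp : ((1 - p^2)^m)^2 * ((m:ℝ)*p^3) ≤ (1 - 2*p^2 + p^3)^m * ((m:ℝ)*p^3) :=
      mul_le_mul_of_nonneg_right hBl hmp0
    have hcmp8 : (1 - 2*p^2 + p^3)^m * ((m:ℝ)*p^3) ≤ 8 * ((1 - p^2)^m)^2 * ((m:ℝ)*p^3) :=
      mul_le_mul_of_nonneg_right hBu hmp0
    have e1 : (2/5) * (((1 - p^2)^m)^2 * ((m:ℝ)*p^3))
        ≤ (1 - 2*p^2 + p^3)^m - ((1 - p^2)^m)^2 := by linarith
    have e2 : (1 - 2*p^2 + p^3)^m - ((1 - p^2)^m)^2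
        ≤ 8 * (((1 - p^2)^m)^2 * ((m:ℝ)*p^3)) := by linarith
    have hAM0 : 0 ≤ ((1 - p^2)^m)^2 * ((m:ℝ)*p^3) := mul_nonneg (by positivity) hmp0
    have l2 : (n:ℝ)^2/9 * ((1 - p^2)^m - ((1 - p^2)^m)^2)
        ≤ ((EP n).card : ℝ) * ((1 - p^2)^m - ((1 - p^2)^m)^2) :=
      mul_le_mul_of_nonneg_right ht2l hD2
    have l1 : (n:ℝ)^3/729 * ((2/5) * (((1 - p^2)^m)^2 * ((m:ℝ)*p^3)))
        ≤ ((S3 n).card : ℝ) * ((1 - 2*p^2 + p^3)^m - ((1 - p^2)^m)^2) :=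
      mul_le_mul ht3l e1 (by linarith) ht3r0
    have l3 : 0 ≤ (n:ℝ)^2 * ((1 - p^2)^m - ((1 - p^2)^m)^2) := mul_nonneg hn2 hD2
    have l4 : 0 ≤ (n:ℝ)^3 * (((1 - p^2)^m)^2 * ((m:ℝ)*p^3)) := mul_nonneg hn3 hAM0
    have u1 : ((EP n).card : ℝ) * ((1 - p^2)^m - ((1 - p^2)^m)^2)
        ≤ (n:ℝ)^2 * ((1 - p^2)^m - ((1 - p^2)^m)^2) :=
      mul_le_mul_of_nonneg_right ht2u hD2
    have u2 : ((S3 n).card : ℝ) * ((1 - 2*p^2 + p^3)^m - ((1 - p^2)^m)^2)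
        ≤ (4 * (n:ℝ)^3) * (8 * (((1 - p^2)^m)^2 * ((m:ℝ)*p^3))) :=
      mul_le_mul ht3u e2 (by linarith) (by positivity)
    constructor
    · nlinarith [l1, l2, l3, l4]
    · nlinarith [u1, u2, l3, l4]

end

end RIG
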